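/- Let M be an m×n complex matrix of rank r, and let I be a list of r row indices and J a list of r column indices such that M̂ = M[I,J] is invertible. Then M = M[:,J] M̂^{-1} M[I,:], i.e., the CUR (skeleton) decomposition is exact. -/
import Mathlib


/-- Exactness of the skeleton (CUR) decomposition for a rank-`r` matrix with an invertible
`r × r` intersection submatrix: `M = M[:,J] M̂⁻¹ M[I,:]`. -/
theorem cur_exact {m n r : ℕ} (M : Matrix (Fin m) (Fin n) ℂ)
    (hrank : M.rank = r)
    (I : Fin r → Fin m) (J : Fin r → Fin n)
    (hI : Function.Injective I) (hJ : Function.Injective J)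
    (hinv : IsUnit (M.submatrix I J)) :
    M = M.submatrix id J * (M.submatrix I J)⁻¹ * M.submatrix I id := by
  classical
  set C : Matrix (Fin m) (Fin r) ℂ := M.submatrix id J with hC
  set Mh : Matrix (Fin r) (Fin r) ℂ := M.submatrix I J with hMh
  set R : Matrix (Fin r) (Fin n) ℂ := M.submatrix I id with hR
  -- C = M * E for a selection matrix E
  have hCM : C = M * (1 : Matrix (Fin n) (Fin n) ℂ).submatrix (Equiv.refl (Fin n)) J := by
    rw [Matrix.mul_submatrix_one]
    rfl
  -- column space of C is contained in that of M
  have hle : LinearMap.range C.mulVecLin ≤ LinearMap.range M.mulVecLin := by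
    rw [hCM, Matrix.mulVecLin_mul]
    exact LinearMap.range_comp_le_range _ _
  -- rank of Mh
  have hMhrank : Mh.rank = r := by
    rw [Matrix.rank_of_isUnit _ hinv, Fintype.card_fin]
  -- rank Mh ≤ rank C since Mh = C.submatrix I (Equiv.refl _)
  have hsub : Mh.rank ≤ C.rank := by
    have hkey : Mh = C.submatrix I (Equiv.refl (Fin r)) := by ext i j; rfl
    rw [hkey, Matrix.rank, Matrix.rank, Matrix.mulVecLin_submatrix, LinearMap.range_comp,
      LinearMap.range_comp,
      show LinearMap.funLeft ℂ ℂ (Equiv.refl (Fin r)).symm =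
        (LinearEquiv.funCongrLeft ℂ ℂ (Equiv.refl (Fin r)).symm : (Fin r → ℂ) →ₗ[ℂ] Fin r → ℂ)
        from rfl,
      LinearEquiv.range, Submodule.map_top]
    exact Submodule.finrank_map_le _ _
  have hranks : (r : ℕ) ≤ C.rank := le_of_eq_of_le hMhrank.symm hsub
  -- ranges are equal
  have heq : LinearMap.range C.mulVecLin = LinearMap.range M.mulVecLin := by
    apply Submodule.eq_of_le_of_finrank_le hle
    rw [← Matrix.rank, ← Matrix.rank, hrank]
    exact hranks
  -- every column of M lies in the range of C
  have hcol : ∀ j : Fin n, ∃ x : Fin r → ℂ, C.mulVec x = fun i => M i j := by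
    intro j
    have : (fun i => M i j) ∈ LinearMap.range M.mulVecLin := by
      refine ⟨Pi.single j 1, ?_⟩
      ext i
      simp [Matrix.mulVecLin_apply, Matrix.mulVec_single_one]
    rw [← heq] at this
    obtain ⟨x, hx⟩ := this
    exact ⟨x, hx⟩
  choose x hx using hcol
  set X : Matrix (Fin r) (Fin n) ℂ := fun k j => x j k with hX
  have hMCX : M = C * X := by
    ext i j
    have := congrFun (hx j) i
    simp only [Matrix.mulVec, dotProduct] at this
    rw [Matrix.mul_apply]
    exact this.symm
  have hRX : R = Mh * X := by
    ext i j
    simp only [hR, Matrix.submatrix_apply, id_eq]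
    rw [hMCX]
    simp [Matrix.mul_apply, Mh, C]
  have hdet : IsUnit Mh.det := (Matrix.isUnit_iff_isUnit_det Mh).mp hinv
  calc M = C * X := hMCX
    _ = C * ((Mh⁻¹ * Mh) * X) := by rw [Matrix.nonsing_inv_mul Mh hdet, Matrix.one_mul]
    _ = C * Mh⁻¹ * (Mh * X) := by rw [Matrix.mul_assoc, Matrix.mul_assoc]
    _ = C * Mh⁻¹ * R := by rw [hRX]
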